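/- arXiv:2507.00194 — 10 statements merged into one kernel-verified Lean document; each statement's English description precedes it below -/
import Mathlib

section
/- Let P be an algebra of S-probabilities and let p ∈ P. If p(s) ≤ 1/2 for all s ∈ S, then p = 0 (the constant zero function), and if p(s) ≥ 1/2 for all s ∈ S, then p = 1 (the constant one function). In particular, every element of P other than 0 and 1 is varying. -/
/-- An `S`-probability: a function `p : S → ℝ` with `0 ≤ p s ≤ 1` for all `s`. -/
def IsProb (S : Type*) (p : S → ℝ) : Prop := ∀ s, 0 ≤ p s ∧ p s ≤ 1

/-- An algebra of `S`-probabilities: a set of `S`-probabilities containing the constant `0`,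
closed under `p ↦ 1 - p`, and containing `p + q + r` for pairwise orthogonal `p, q, r`
(where `p ⊥ q` means `p ≤ 1 - q`). -/
def IsAlg (S : Type*) (P : Set (S → ℝ)) : Prop :=
  (∀ p ∈ P, IsProb S p) ∧
  (0 : S → ℝ) ∈ P ∧
  (∀ p ∈ P, 1 - p ∈ P) ∧
  ∀ p q r : S → ℝ, p ∈ P → q ∈ P → r ∈ P →
    p ≤ 1 - q → q ≤ 1 - r → r ≤ 1 - p → p + q + r ∈ P

/-- A function `p : S → ℝ` is varying if it is neither everywhere `≤ 1/2`
nor everywhere `≥ 1/2`. -/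
def Varying (S : Type*) (p : S → ℝ) : Prop :=
  ¬(∀ s, p s ≤ 1 / 2) ∧ ¬(∀ s, 1 / 2 ≤ p s)

/-- `m` is the infimum of `p` and `q` within the poset `(P, ≤)`. -/
def IsInfIn (S : Type*) (P : Set (S → ℝ)) (p q m : S → ℝ) : Prop :=
  m ∈ P ∧ m ≤ p ∧ m ≤ q ∧ ∀ u ∈ P, u ≤ p → u ≤ q → u ≤ m

/-- `j` is the supremum of `p` and `q` within the poset `(P, ≤)`. -/
def IsSupIn (S : Type*) (P : Set (S → ℝ)) (p q j : S → ℝ) : Prop :=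
  j ∈ P ∧ p ≤ j ∧ q ≤ j ∧ ∀ u ∈ P, p ≤ u → q ≤ u → j ≤ u

/-- A Boolean algebra of `S`-probabilities: an algebra of `S`-probabilities in which any two
elements have an infimum and a supremum within `(P, ≤)`, the resulting lattice is distributive,
and for every `p ∈ P` the infimum of `p` and `1 - p` is `0` and their supremum is `1`. -/
def IsBooleanAlg (S : Type*) (P : Set (S → ℝ)) : Prop :=
  IsAlg S P ∧
  (∀ p ∈ P, ∀ q ∈ P, (∃ m, IsInfIn S P p q m) ∧ (∃ j, IsSupIn S P p q j)) ∧
  (∀ p ∈ P, ∀ q ∈ P, ∀ r ∈ P, ∀ qr a pq pr b : S → ℝ,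
    IsSupIn S P q r qr → IsInfIn S P p qr a →
    IsInfIn S P p q pq → IsInfIn S P p r pr → IsSupIn S P pq pr b → a = b) ∧
  ∀ p ∈ P, IsInfIn S P p (1 - p) 0 ∧ IsSupIn S P p (1 - p) 1

/-- The extension `(p, c)` of `p : S → ℝ` to `S̄ = S ∪ {s̄}` (modelled as `Option S`,
with `none` playing the role of the new state `s̄`), taking the value `c` at `s̄`. -/
def extFun {S : Type*} (p : S → ℝ) (c : ℝ) : Option S → ℝ :=
  fun x => Option.elim x c p

/-- The `0,1`-extension `P̄ = {(p,0) : p ∈ P} ∪ {(p,1) : p ∈ P}` of a set `P` of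
`S`-probabilities. -/
def extSet {S : Type*} (P : Set (S → ℝ)) : Set (Option S → ℝ) :=
  {f | ∃ p ∈ P, f = extFun p 0 ∨ f = extFun p 1}

/-- `p` and `q` are partially reciprocal below `1/2`. -/
def PRBelow (S : Type*) (p q : S → ℝ) : Prop := ∀ s, min (p s) (q s) ≤ 1 / 2

/-- `p` and `q` are partially reciprocal above `1/2`. -/
def PRAbove (S : Type*) (p q : S → ℝ) : Prop := ∀ s, 1 / 2 ≤ max (p s) (q s)

/-- `p` and `q` are reciprocal. -/
def Reciprocal (S : Type*) (p q : S → ℝ) : Prop := PRBelow S p q ∧ PRAbove S p q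

/-- Two functions are incomparable in the pointwise order. -/
def Incomp {S : Type*} (a b : S → ℝ) : Prop := ¬a ≤ b ∧ ¬b ≤ a

/-- An algebra of `S`-probabilities of type `MO₂`,
with the six pairwise distinct elements `0, p₁, 1 - p₁, p₂, 1 - p₂, 1` such that
`p₁, 1 - p₁, p₂, 1 - p₂` are pairwise incomparable. -/
def IsMO2 (S : Type*) (P : Set (S → ℝ)) (p1 p2 : S → ℝ) : Prop :=
  IsAlg S P ∧
  P = {0, p1, 1 - p1, p2, 1 - p2, 1} ∧
  ([(0 : S → ℝ), p1, 1 - p1, p2, 1 - p2, 1].Pairwise (· ≠ ·)) ∧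
  Incomp p1 (1 - p1) ∧ Incomp p1 p2 ∧ Incomp p1 (1 - p2) ∧
  Incomp (1 - p1) p2 ∧ Incomp (1 - p1) (1 - p2) ∧ Incomp p2 (1 - p2)

/-- `f` is an atom of `P`: a minimal element of `P \ {0}`. -/
def IsAtomOf (S : Type*) (P : Set (S → ℝ)) (f : S → ℝ) : Prop :=
  f ∈ P ∧ f ≠ 0 ∧ ∀ g ∈ P, g ≠ 0 → g ≤ f → g = f

/-! A self-orthogonal `q ∈ P` may be added to itself arbitrarily often, since at each stage
`q, q, n • q` are pairwise orthogonal precisely because `(n + 1) • q ∈ P` is bounded by `1`.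
So `n • q ≤ 1` for every `n`, which by the Archimedean property forces `q = 0`. An element
bounded by `1/2` is self-orthogonal; for one bounded below by `1/2`, apply this to `1 - p`. -/

namespace IsAlg

variable {S : Type*} {P : Set (S → ℝ)}

theorem nonneg_of_mem (hP : IsAlg S P) {p : S → ℝ} (hp : p ∈ P) : 0 ≤ p :=
  fun s => (hP.1 p hp s).1

theorem le_one_of_mem (hP : IsAlg S P) {p : S → ℝ} (hp : p ∈ P) : p ≤ 1 :=
  fun s => (hP.1 p hp s).2

theorem nsmul_mem_of_le_one_sub_self (hP : IsAlg S P) {q : S → ℝ} (hq : q ∈ P)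
    (hqq : q ≤ 1 - q) (n : ℕ) : n • q ∈ P := by
  induction n using Nat.twoStepInduction with
  | zero => simpa using hP.2.1
  | one => simpa using hq
  | more n hn hn₁ =>
    have hnq : n • q ≤ 1 - q :=
      le_sub_iff_add_le.mpr (succ_nsmul q n ▸ hP.le_one_of_mem hn₁)
    have hsum := hP.2.2.2 q q (n • q) hq hq hn hqq (le_sub_comm.mp hnq) hnq
    rwa [add_nsmul, two_nsmul, add_comm]

theorem eq_zero_of_le_one_sub_self (hP : IsAlg S P) {q : S → ℝ} (hq : q ∈ P)
    (hqq : q ≤ 1 - q) : q = 0 := by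
  funext s
  by_contra hne
  have hpos : 0 < q s := (hP.nonneg_of_mem hq s).lt_of_ne' hne
  obtain ⟨n, hn⟩ := exists_lt_nsmul hpos 1
  exact hn.not_ge (hP.le_one_of_mem (hP.nsmul_mem_of_le_one_sub_self hq hqq n) s)

theorem eq_zero_of_forall_le_half (hP : IsAlg S P) {p : S → ℝ} (hp : p ∈ P)
    (h : ∀ s, p s ≤ 1 / 2) : p = 0 :=
  hP.eq_zero_of_le_one_sub_self hp fun s => by
    simp only [Pi.sub_apply, Pi.one_apply]
    linarith [h s]

theorem eq_one_of_forall_half_le (hP : IsAlg S P) {p : S → ℝ} (hp : p ∈ P)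
    (h : ∀ s, 1 / 2 ≤ p s) : p = 1 := by
  have hc : 1 - p = 0 := hP.eq_zero_of_forall_le_half (hP.2.2.1 p hp) fun s => by
    simp only [Pi.sub_apply, Pi.one_apply]
    linarith [h s]
  exact (sub_eq_zero.mp hc).symm

end IsAlg

theorem stmt_0_general {S : Type*} {P : Set (S → ℝ)} (hP : IsAlg S P)
    {p : S → ℝ} (hp : p ∈ P) :
    ((∀ s, p s ≤ 1 / 2) → p = 0) ∧ ((∀ s, 1 / 2 ≤ p s) → p = 1) ∧
    (p ≠ 0 → p ≠ 1 → Varying S p) := by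
  have h₀ := hP.eq_zero_of_forall_le_half hp
  have h₁ := hP.eq_one_of_forall_half_le hp
  exact ⟨h₀, h₁, fun hp₀ hp₁ => ⟨mt h₀ hp₀, mt h₁ hp₁⟩⟩

theorem stmt_0 {S : Type*} [Nonempty S] {P : Set (S → ℝ)} (hP : IsAlg S P)
    {p : S → ℝ} (hp : p ∈ P) :
    ((∀ s, p s ≤ 1 / 2) → p = 0) ∧ ((∀ s, 1 / 2 ≤ p s) → p = 1) ∧
    (p ≠ 0 → p ≠ 1 → Varying S p) :=
  stmt_0_general hP hp
end

section
/- Let P be an algebra of S-probabilities and let p, q ∈ P with p ≤ 1 − q. Then p + q ∈ P and p + q is the least upper bound of p and q within the poset (P, ≤): p ≤ p + q, q ≤ p + q, and every u ∈ P with p ≤ u and q ≤ u satisfies p + q ≤ u. -/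
namespace IsProb

variable {S : Type*} {p : S → ℝ}

lemma nonneg (hp : IsProb S p) : 0 ≤ p := fun s => (hp s).1

lemma le_one (hp : IsProb S p) : p ≤ 1 := fun s => (hp s).2

end IsProb

namespace IsAlg

variable {S : Type*} {P : Set (S → ℝ)} {p q u : S → ℝ}

lemma add_mem (hP : IsAlg S P) (hp : p ∈ P) (hq : q ∈ P) (hpq : p ≤ 1 - q) : p + q ∈ P := by
  have hq0 : q ≤ 1 - 0 := by simpa using (hP.1 q hq).le_one
  have h0p : (0 : S → ℝ) ≤ 1 - p := sub_nonneg.mpr (hP.1 p hp).le_one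
  simpa using hP.2.2.2 p q 0 hp hq hP.2.1 hpq hq0 h0p

/-- An upper bound `u ∈ P` of `p` and `q` leaves room for `1 - u` beside them: `p, q, 1 - u`
are pairwise orthogonal, and `p + q + (1 - u) ≤ 1` is `p + q ≤ u`. -/
lemma add_le (hP : IsAlg S P) (hp : p ∈ P) (hq : q ∈ P) (hpq : p ≤ 1 - q) (hu : u ∈ P)
    (hpu : p ≤ u) (hqu : q ≤ u) : p + q ≤ u := by
  have hq_orth : q ≤ 1 - (1 - u) := by rwa [sub_sub_cancel]
  have hu_orth : 1 - u ≤ 1 - p := sub_le_sub_left hpu 1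
  have hmem := hP.2.2.2 p q (1 - u) hp hq (hP.2.2.1 u hu) hpq hq_orth hu_orth
  have hle : p + q + (1 - u) ≤ 1 := (hP.1 _ hmem).le_one
  rw [← sub_nonneg] at hle ⊢
  convert hle using 1
  abel

lemma isSupIn_add (hP : IsAlg S P) (hp : p ∈ P) (hq : q ∈ P) (hpq : p ≤ 1 - q) :
    IsSupIn S P p q (p + q) :=
  ⟨hP.add_mem hp hq hpq, le_add_of_nonneg_right (hP.1 q hq).nonneg,
    le_add_of_nonneg_left (hP.1 p hp).nonneg, fun _ hu hpu hqu => hP.add_le hp hq hpq hu hpu hqu⟩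

end IsAlg

theorem stmt_1_general {S : Type*} {P : Set (S → ℝ)} (hP : IsAlg S P)
    {p q : S → ℝ} (hp : p ∈ P) (hq : q ∈ P) (hpq : p ≤ 1 - q) :
    p + q ∈ P ∧ p ≤ p + q ∧ q ≤ p + q ∧ ∀ u ∈ P, p ≤ u → q ≤ u → p + q ≤ u :=
  hP.isSupIn_add hp hq hpq

theorem stmt_1 {S : Type*} [Nonempty S] {P : Set (S → ℝ)} (hP : IsAlg S P)
    {p q : S → ℝ} (hp : p ∈ P) (hq : q ∈ P) (hpq : p ≤ 1 - q) :
    p + q ∈ P ∧ p ≤ p + q ∧ q ≤ p + q ∧ ∀ u ∈ P, p ≤ u → q ≤ u → p + q ≤ u :=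
  stmt_1_general hP hp hq hpq
end

section
/- Let P be an algebra of S-probabilities, p ∈ P, and let q be an S-probability such that either (p(s) − 1/2 ≤ q(s) ≤ p(s) for all s ∈ S and q ≠ p) or (p(s) ≤ q(s) ≤ p(s) + 1/2 for all s ∈ S and q ≠ p). Then q is destructive: there exists no algebra Q of S-probabilities with P ∪ {q} ⊆ Q. -/
/-! An algebra `Q` of `S`-probabilities is closed under differences `a - b` of comparable
elements `b ≤ a`, being the complement of `b + (1 - a)`. So if `Q` contained both `p` and `q`,
it would contain `d = |p - q|`, and `d ≤ 1/2` means `d ⊥ d`. Then `(n + 2) • d = n • d + d + d`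
puts every multiple of `d` into `Q`; as these are bounded by `1`, `d = 0`. -/

namespace IsAlg

variable {S : Type*} {Q : Set (S → ℝ)}

theorem sub_mem (hQ : IsAlg S Q) {a b : S → ℝ} (ha : a ∈ Q) (hb : b ∈ Q) (hba : b ≤ a) :
    a - b ∈ Q := by
  obtain ⟨hprob, h0, hcompl, hsum⟩ := hQ
  have hsum_mem : b + (1 - a) + 0 ∈ Q := by
    refine hsum b (1 - a) 0 hb (hcompl a ha) h0 ?_ ?_ ?_ <;> intro s
    · simpa using hba s
    · simpa using (hprob a ha s).1
    · simpa using (hprob b hb s).2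
  convert hcompl _ hsum_mem using 1
  ring

theorem nsmul_mem_of_le_one_sub_self_s2 (hQ : IsAlg S Q) {d : S → ℝ} (hd : d ∈ Q)
    (hdd : d ≤ 1 - d) (n : ℕ) : n • d ∈ Q := by
  induction n using Nat.twoStepInduction with
  | zero => simpa using hQ.2.1
  | one => simpa using hd
  | more n hn hn1 =>
    have hle_one : (n + 1) • d ≤ 1 := fun s => (hQ.1 _ hn1 s).2
    have hn_orth : n • d ≤ 1 - d := le_sub_iff_add_le.mpr (succ_nsmul d n ▸ hle_one)
    convert hQ.2.2.2 _ d d hn hd hd hn_orth hdd (le_sub_comm.mp hn_orth) using 1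
    rw [add_nsmul, two_nsmul, add_assoc]

theorem eq_zero_of_le_one_sub_self_s2 (hQ : IsAlg S Q) {d : S → ℝ} (hd : d ∈ Q)
    (hdd : d ≤ 1 - d) : d = 0 := by
  funext s
  refine le_antisymm ?_ (hQ.1 d hd s).1
  by_contra! hpos
  obtain ⟨n, hn⟩ := exists_nat_gt (1 / d s)
  have hmul_le : n * d s ≤ 1 := by
    simpa using (hQ.1 _ (hQ.nsmul_mem_of_le_one_sub_self_s2 hd hdd n) s).2
  rw [div_lt_iff₀ hpos] at hn
  linarith

theorem eq_of_le_of_le_add_half (hQ : IsAlg S Q) {a b : S → ℝ} (ha : a ∈ Q) (hb : b ∈ Q)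
    (hba : b ≤ a) (hab : ∀ s, a s ≤ b s + 1 / 2) : a = b := by
  have hdiff : a - b = 0 := by
    refine hQ.eq_zero_of_le_one_sub_self_s2 (hQ.sub_mem ha hb hba) fun s => ?_
    simp only [Pi.sub_apply, Pi.one_apply]
    linarith [hab s]
  exact sub_eq_zero.mp hdiff

end IsAlg

theorem stmt_2_general {S : Type*} {P : Set (S → ℝ)}
    {p : S → ℝ} (hp : p ∈ P) {q : S → ℝ}
    (h : ((∀ s, p s - 1 / 2 ≤ q s ∧ q s ≤ p s) ∧ q ≠ p) ∨
         ((∀ s, p s ≤ q s ∧ q s ≤ p s + 1 / 2) ∧ q ≠ p)) :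
    ¬∃ Q : Set (S → ℝ), IsAlg S Q ∧ P ∪ {q} ⊆ Q := by
  rintro ⟨Q, hQ, hPQ⟩
  have hpQ : p ∈ Q := hPQ (.inl hp)
  have hqQ : q ∈ Q := hPQ (.inr rfl)
  rcases h with ⟨hbound, hne⟩ | ⟨hbound, hne⟩
  · refine hne (hQ.eq_of_le_of_le_add_half hpQ hqQ (fun s => (hbound s).2) fun s => ?_).symm
    linarith [(hbound s).1]
  · exact hne (hQ.eq_of_le_of_le_add_half hqQ hpQ (fun s => (hbound s).1) fun s => (hbound s).2)

theorem stmt_2 {S : Type*} [Nonempty S] {P : Set (S → ℝ)} (hP : IsAlg S P)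
    {p : S → ℝ} (hp : p ∈ P) {q : S → ℝ} (hq : IsProb S q)
    (h : ((∀ s, p s - 1 / 2 ≤ q s ∧ q s ≤ p s) ∧ q ≠ p) ∨
         ((∀ s, p s ≤ q s ∧ q s ≤ p s + 1 / 2) ∧ q ≠ p)) :
    ¬∃ Q : Set (S → ℝ), IsAlg S Q ∧ P ∪ {q} ⊆ Q :=
  stmt_2_general hp h
end

section
/- Let P be a set of S-probabilities and let P̄ be its 0,1-extension on S̄. Then P is an algebra of S-probabilities if and only if P̄ is an algebra of S̄-probabilities. -/
/-! The map `(p, c) ↦ extFun p c` identifies `P̄` with `P × {0, 1}`, and all operations of an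
algebra act componentwise. On the `{0, 1}` component they are harmless: `1 - c` stays in `{0, 1}`,
and pairwise orthogonality at `s̄` lets at most one of three values be `1`, so their sum stays in
`{0, 1}` as well. Conversely, `P` sits inside `P̄` as `p ↦ (p, 0)`. -/

section

variable {S : Type*}

@[simp] lemma extFun_none (p : S → ℝ) (c : ℝ) : extFun p c none = c := rfl

@[simp] lemma extFun_some (p : S → ℝ) (c : ℝ) (s : S) : extFun p c (some s) = p s := rfl

lemma extFun_zero : extFun (0 : S → ℝ) 0 = 0 := by
  funext x; cases x <;> rfl

lemma one_sub_extFun (p : S → ℝ) (c : ℝ) : 1 - extFun p c = extFun (1 - p) (1 - c) := by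
  funext x; cases x <;> rfl

lemma extFun_add (p q : S → ℝ) (c d : ℝ) :
    extFun p c + extFun q d = extFun (p + q) (c + d) := by
  funext x; cases x <;> rfl

lemma extFun_inj {p q : S → ℝ} {c d : ℝ} : extFun p c = extFun q d ↔ p = q ∧ c = d := by
  refine ⟨fun h => ⟨funext fun s => congrFun h (some s), congrFun h none⟩, ?_⟩
  rintro ⟨rfl, rfl⟩
  rfl

lemma extFun_le_extFun_iff {p q : S → ℝ} {c d : ℝ} :
    extFun p c ≤ extFun q d ↔ p ≤ q ∧ c ≤ d := by
  simp only [Pi.le_def, Option.forall, extFun_none, extFun_some]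
  exact and_comm

lemma isProb_extFun_iff {p : S → ℝ} {c : ℝ} :
    IsProb (Option S) (extFun p c) ↔ IsProb S p ∧ 0 ≤ c ∧ c ≤ 1 := by
  simp only [IsProb, Option.forall, extFun_none, extFun_some]
  exact and_comm

lemma mem_extSet_iff {P : Set (S → ℝ)} {f : Option S → ℝ} :
    f ∈ extSet P ↔ ∃ p ∈ P, ∃ c ∈ ({0, 1} : Set ℝ), f = extFun p c := by
  simp only [extSet, Set.mem_ofPred_eq, Set.mem_insert_iff, Set.mem_singleton_iff,
    exists_eq_or_imp, exists_eq_left]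

lemma extFun_mem_extSet_iff {P : Set (S → ℝ)} {p : S → ℝ} {c : ℝ} :
    extFun p c ∈ extSet P ↔ p ∈ P ∧ c ∈ ({0, 1} : Set ℝ) := by
  simp only [mem_extSet_iff, extFun_inj]
  constructor
  · rintro ⟨q, hq, d, hd, rfl, rfl⟩
    exact ⟨hq, hd⟩
  · rintro ⟨hp, hc⟩
    exact ⟨p, hp, c, hc, rfl, rfl⟩

lemma add_add_mem_zero_one {c d e : ℝ} (hc : c ∈ ({0, 1} : Set ℝ)) (hd : d ∈ ({0, 1} : Set ℝ))
    (he : e ∈ ({0, 1} : Set ℝ)) (hcd : c ≤ 1 - d) (hde : d ≤ 1 - e) (hec : e ≤ 1 - c) :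
    c + d + e ∈ ({0, 1} : Set ℝ) := by
  simp only [Set.mem_insert_iff, Set.mem_singleton_iff] at *
  rcases hc with rfl | rfl <;> rcases hd with rfl | rfl <;> rcases he with rfl | rfl <;>
    norm_num at *

lemma one_sub_mem_zero_one {c : ℝ} (hc : c ∈ ({0, 1} : Set ℝ)) : 1 - c ∈ ({0, 1} : Set ℝ) := by
  simp only [Set.mem_insert_iff, Set.mem_singleton_iff] at *
  rcases hc with rfl | rfl <;> norm_num

lemma isAlg_extSet {P : Set (S → ℝ)} (h : IsAlg S P) : IsAlg (Option S) (extSet P) := by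
  obtain ⟨hprob, hzero, hcompl, hsum⟩ := h
  refine ⟨?_, ?_, ?_, ?_⟩
  · intro f hf
    obtain ⟨p, hp, c, hc, rfl⟩ := mem_extSet_iff.1 hf
    refine isProb_extFun_iff.2 ⟨hprob p hp, ?_⟩
    rcases hc with rfl | rfl <;> norm_num
  · rw [← extFun_zero, extFun_mem_extSet_iff]
    exact ⟨hzero, by simp⟩
  · intro f hf
    obtain ⟨p, hp, c, hc, rfl⟩ := mem_extSet_iff.1 hf
    rw [one_sub_extFun, extFun_mem_extSet_iff]
    exact ⟨hcompl p hp, one_sub_mem_zero_one hc⟩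
  · intro f g h hf hg hh hfg hgh hhf
    obtain ⟨p, hp, c, hc, rfl⟩ := mem_extSet_iff.1 hf
    obtain ⟨q, hq, d, hd, rfl⟩ := mem_extSet_iff.1 hg
    obtain ⟨r, hr, e, he, rfl⟩ := mem_extSet_iff.1 hh
    simp only [one_sub_extFun, extFun_le_extFun_iff] at hfg hgh hhf
    rw [extFun_add, extFun_add, extFun_mem_extSet_iff]
    exact ⟨hsum p q r hp hq hr hfg.1 hgh.1 hhf.1,
      add_add_mem_zero_one hc hd he hfg.2 hgh.2 hhf.2⟩

lemma isAlg_of_isAlg_extSet {P : Set (S → ℝ)} (h : IsAlg (Option S) (extSet P)) :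
    IsAlg S P := by
  obtain ⟨hprob, hzero, hcompl, hsum⟩ := h
  have extFun_zero_mem : ∀ {p : S → ℝ}, p ∈ P → extFun p 0 ∈ extSet P :=
    fun hp => extFun_mem_extSet_iff.2 ⟨hp, by simp⟩
  have orth : ∀ {p q : S → ℝ}, p ≤ 1 - q → extFun p 0 ≤ 1 - extFun q 0 := fun hpq => by
    rw [one_sub_extFun, extFun_le_extFun_iff]
    exact ⟨hpq, by norm_num⟩
  refine ⟨fun p hp => (isProb_extFun_iff.1 (hprob _ (extFun_zero_mem hp))).1, ?_, ?_, ?_⟩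
  · rw [← extFun_zero] at hzero
    exact (extFun_mem_extSet_iff.1 hzero).1
  · intro p hp
    have hcompl_p := hcompl _ (extFun_zero_mem hp)
    rw [one_sub_extFun, extFun_mem_extSet_iff] at hcompl_p
    exact hcompl_p.1
  · intro p q r hp hq hr hpq hqr hrp
    have hpqr := hsum _ _ _ (extFun_zero_mem hp) (extFun_zero_mem hq) (extFun_zero_mem hr)
      (orth hpq) (orth hqr) (orth hrp)
    rw [extFun_add, extFun_add] at hpqr
    exact (extFun_mem_extSet_iff.1 hpqr).1

end

theorem stmt_3_general {S : Type*} {P : Set (S → ℝ)} :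
    IsAlg S P ↔ IsAlg (Option S) (extSet P) :=
  ⟨isAlg_extSet, isAlg_of_isAlg_extSet⟩

theorem stmt_3 {S : Type*} [Nonempty S] {P : Set (S → ℝ)}
    (hP : ∀ p ∈ P, IsProb S p) :
    IsAlg S P ↔ IsAlg (Option S) (extSet P) :=
  stmt_3_general
end

section
/- Let P be an algebra of S-probabilities with 0,1-extension P̄ on S̄, let p ∈ P, let c ∈ ℝ with 0 < c < 1, and set q̄ := (p, c) (the S̄-probability agreeing with p on S and taking the value c at s̄). Then q̄ is destructive: there exists no algebra Q of S̄-probabilities with P̄ ∪ {q̄} ⊆ Q. -/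
/-! Subtracting `(p,0)` from `(p,c)` and `(p,c)` from `(p,1)` puts `(0,c)` and `(0,1-c)` into any
algebra containing `P̄ ∪ {(p,c)}`; one of them is nonzero yet bounded by `1/2`. But an algebra has
no nonzero self-orthogonal element `u`: the multiples `n • u` stay in it as long as `n • u ≤ 1`,
and for the last such `n` the pairwise orthogonal sum `(n-1) • u + u + u` exceeds `1` somewhere. -/

namespace IsAlg

variable {T : Type*} {Q : Set (T → ℝ)} {f g u : T → ℝ}

theorem nonneg (hQ : IsAlg T Q) (hf : f ∈ Q) : 0 ≤ f := fun x => (hQ.1 f hf x).1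

theorem le_one (hQ : IsAlg T Q) (hf : f ∈ Q) : f ≤ 1 := fun x => (hQ.1 f hf x).2

theorem add_mem_s6 (hQ : IsAlg T Q) (hf : f ∈ Q) (hg : g ∈ Q) (hfg : f ≤ 1 - g) : f + g ∈ Q := by
  have hsum := hQ.2.2.2 f g 0 hf hg hQ.2.1 hfg (by simpa only [sub_zero] using hQ.le_one hg)
    (hQ.nonneg (hQ.2.2.1 f hf))
  simpa only [add_zero] using hsum

theorem sub_mem_s6 (hQ : IsAlg T Q) (hf : f ∈ Q) (hg : g ∈ Q) (hfg : f ≤ g) : g - f ∈ Q := by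
  have hsum := hQ.add_mem_s6 hf (hQ.2.2.1 g hg) (by rwa [sub_sub_cancel])
  convert hQ.2.2.1 _ hsum using 1
  abel

theorem nsmul_mem (hQ : IsAlg T Q) (hu : u ∈ Q) : ∀ n : ℕ, n • u ≤ 1 → n • u ∈ Q
  | 0, _ => by simpa using hQ.2.1
  | n + 1, hn => by
    rw [succ_nsmul] at hn ⊢
    have hle : n • u ≤ 1 - u := le_sub_iff_add_le.mpr hn
    exact hQ.add_mem_s6 (hQ.nsmul_mem hu n (hle.trans (sub_le_self 1 (hQ.nonneg hu)))) hu hle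

theorem eq_zero_of_le_one_sub_self_s6 (hQ : IsAlg T Q) (hu : u ∈ Q) (huu : u ≤ 1 - u) : u = 0 := by
  by_contra hne
  obtain ⟨x, hx⟩ : ∃ x, 0 < u x := by
    by_contra! h
    exact hne (le_antisymm h (hQ.nonneg hu))
  have hbig : ∃ n : ℕ, ¬n • u ≤ 1 := by
    obtain ⟨n, hn⟩ := exists_lt_nsmul hx 1
    exact ⟨n, fun h => (h x).not_gt (by simpa using hn)⟩
  classical
  have h2 : 2 • u ≤ 1 := two_nsmul u ▸ le_sub_iff_add_le.mp huu
  have hN : ¬Nat.find hbig • u ≤ 1 := Nat.find_spec hbig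
  have hmin : ∀ n < Nat.find hbig, n • u ≤ 1 := fun n hn => not_not.mp (Nat.find_min hbig hn)
  have h3 : 3 ≤ Nat.find hbig := by
    by_contra! h
    exact hN ((nsmul_le_nsmul_left (hQ.nonneg hu) (by omega : Nat.find hbig ≤ 2)).trans h2)
  obtain ⟨m, hmN⟩ : ∃ m, Nat.find hbig = m + 3 := ⟨Nat.find hbig - 3, by omega⟩
  rw [hmN] at hN hmin
  have hm : (m + 1) • u + u ≤ 1 := succ_nsmul u (m + 1) ▸ hmin (m + 2) (by omega)
  have hm1 : (m + 1) • u ≤ 1 := (le_add_of_nonneg_right (hQ.nonneg hu)).trans hm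
  have hmem := hQ.2.2.2 _ u u (hQ.nsmul_mem hu (m + 1) hm1) hu hu
    (le_sub_iff_add_le.mpr hm) huu (le_sub_iff_add_le'.mpr hm)
  refine hN (le_of_eq_of_le ?_ (hQ.le_one hmem))
  simp only [succ_nsmul]

end IsAlg

theorem extFun_sub_extFun {S : Type*} (p : S → ℝ) (a b : ℝ) :
    extFun p a - extFun p b = extFun 0 (a - b) := by
  funext x
  cases x <;> simp [extFun]

theorem extFun_mono {S : Type*} (p : S → ℝ) {a b : ℝ} (hab : a ≤ b) : extFun p a ≤ extFun p b
  | none => hab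
  | some _ => le_rfl

theorem stmt_6_general {S : Type*} {P : Set (S → ℝ)}
    {p : S → ℝ} (hp : p ∈ P) {c : ℝ} (hc0 : 0 < c) (hc1 : c < 1) :
    ¬∃ Q : Set (Option S → ℝ), IsAlg (Option S) Q ∧ extSet P ∪ {extFun p c} ⊆ Q := by
  rintro ⟨Q, hQ, hsub⟩
  have h0 : extFun p 0 ∈ Q := hsub (Or.inl ⟨p, hp, Or.inl rfl⟩)
  have h1 : extFun p 1 ∈ Q := hsub (Or.inl ⟨p, hp, Or.inr rfl⟩)
  have hc : extFun p c ∈ Q := hsub (Or.inr rfl)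
  have lower : extFun 0 c ∈ Q := by
    simpa only [extFun_sub_extFun, sub_zero] using hQ.sub_mem_s6 h0 hc (extFun_mono p hc0.le)
  have upper : extFun 0 (1 - c) ∈ Q := by
    simpa only [extFun_sub_extFun] using hQ.sub_mem_s6 hc h1 (extFun_mono p hc1.le)
  have not_mem : ∀ a : ℝ, 0 < a → a ≤ 1 / 2 → extFun (0 : S → ℝ) a ∉ Q := by
    intro a ha0 ha hmem
    have huu : extFun (0 : S → ℝ) a ≤ 1 - extFun 0 a
      | none => show a ≤ 1 - a by linarith
      | some _ => show (0 : ℝ) ≤ 1 - 0 by norm_num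
    exact ha0.ne' (congrFun (hQ.eq_zero_of_le_one_sub_self_s6 hmem huu) none)
  rcases le_total c (1 / 2) with h | h
  · exact not_mem c hc0 h lower
  · exact not_mem (1 - c) (by linarith) (by linarith) upper

theorem stmt_6 {S : Type*} [Nonempty S] {P : Set (S → ℝ)} (hP : IsAlg S P)
    {p : S → ℝ} (hp : p ∈ P) {c : ℝ} (hc0 : 0 < c) (hc1 : c < 1) :
    ¬∃ Q : Set (Option S → ℝ), IsAlg (Option S) Q ∧ extSet P ∪ {extFun p c} ⊆ Q :=
  stmt_6_general hp hc0 hc1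
end

section
/- Let P be an algebra of S-probabilities and p, q ∈ P. If p and q are partially reciprocal below 1/2 and u ∈ P satisfies u ≤ p and u ≤ q, then u = 0. Dually, if p and q are partially reciprocal above 1/2 and v ∈ P satisfies p ≤ v and q ≤ v, then v = 1. -/
/-
If `u ∈ P` stays below `1/2`, then `u ⊥ u`, and `u ⊥ n • u` as long as `(n + 1) • u ∈ P`; so
by induction every multiple `n • u` lies in `P` and is bounded by `1`, which forces `u = 0`.
The case above `1/2` is the dual one, applied to `1 - v`.
-/

namespace IsAlg

variable {S : Type*} {P : Set (S → ℝ)}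

theorem nsmul_mem_of_le_half (hP : IsAlg S P) {u : S → ℝ} (hu : u ∈ P)
    (hhalf : ∀ s, u s ≤ 1 / 2) (n : ℕ) : n • u ∈ P := by
  obtain ⟨hprob, hzero, -, hadd⟩ := hP
  induction n using Nat.twoStepInduction with
  | zero => simpa using hzero
  | one => simpa using hu
  | more n hn hsucc =>
    have hsucc_le : ∀ s, n • u s + u s ≤ 1 := fun s => by
      simpa only [succ_nsmul, Pi.add_apply, Pi.smul_apply] using (hprob _ hsucc s).2
    rw [add_nsmul, two_nsmul, add_comm]
    refine hadd u u (n • u) hu hu hn (fun s => ?_) (fun s => ?_) (fun s => ?_) <;>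
      simp only [Pi.sub_apply, Pi.one_apply, Pi.smul_apply] <;>
      linarith [hhalf s, hsucc_le s]

theorem eq_zero_of_le_half (hP : IsAlg S P) {u : S → ℝ} (hu : u ∈ P)
    (hhalf : ∀ s, u s ≤ 1 / 2) : u = 0 := by
  funext s
  have hnonneg : 0 ≤ u s := (hP.1 u hu s).1
  refine le_antisymm (not_lt.mp fun hpos => ?_) hnonneg
  obtain ⟨n, hn⟩ := exists_lt_nsmul hpos 1
  exact hn.not_ge (hP.1 _ (hP.nsmul_mem_of_le_half hu hhalf n) s).2

theorem eq_one_of_half_le (hP : IsAlg S P) {v : S → ℝ} (hv : v ∈ P)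
    (hhalf : ∀ s, 1 / 2 ≤ v s) : v = 1 := by
  have hcompl : 1 - v = 0 :=
    hP.eq_zero_of_le_half (hP.2.2.1 v hv) fun s => by
      simp only [Pi.sub_apply, Pi.one_apply]
      linarith [hhalf s]
  exact (sub_eq_zero.mp hcompl).symm

end IsAlg

theorem stmt_8_general {S : Type*} {P : Set (S → ℝ)} (hP : IsAlg S P)
    {p q : S → ℝ} :
    (PRBelow S p q → ∀ u ∈ P, u ≤ p → u ≤ q → u = 0) ∧
    (PRAbove S p q → ∀ v ∈ P, p ≤ v → q ≤ v → v = 1) := by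
  refine ⟨fun hpr u hu hup huq => hP.eq_zero_of_le_half hu fun s => ?_,
    fun hpr v hv hpv hqv => hP.eq_one_of_half_le hv fun s => ?_⟩
  · rcases min_le_iff.mp (hpr s) with h | h
    · exact (hup s).trans h
    · exact (huq s).trans h
  · rcases le_max_iff.mp (hpr s) with h | h
    · exact h.trans (hpv s)
    · exact h.trans (hqv s)

theorem stmt_8 {S : Type*} [Nonempty S] {P : Set (S → ℝ)} (hP : IsAlg S P)
    {p q : S → ℝ} (hp : p ∈ P) (hq : q ∈ P) :
    (PRBelow S p q → ∀ u ∈ P, u ≤ p → u ≤ q → u = 0) ∧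
    (PRAbove S p q → ∀ v ∈ P, p ≤ v → q ≤ v → v = 1) :=
  stmt_8_general hP
end

section
/- Let P be a Boolean algebra of S-probabilities and let q be a varying S-probability with q ∉ P. Suppose there exists p ∈ P such that one of the following holds: (i) min(p(s), q(s)) ≤ 1/2 for all s ∈ S and p(s₀) + q(s₀) > 1 for some s₀ ∈ S; (ii) max(p(s), q(s)) ≥ 1/2 for all s ∈ S and p(s₀) + q(s₀) < 1 for some s₀ ∈ S; (iii) min(p(s), q(s)) ≤ 1/2 and max(p(s), q(s)) ≥ 1/2 for all s ∈ S. Then q is critical: there exists no Boolean algebra Q of S-probabilities with P ∪ {q} ⊆ Q. -/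
/-
In a Boolean algebra `Q`, an element `m` with `m ≤ 1/2` everywhere satisfies
`m ≤ 1 - m`, hence `m ≤ m ⊓ (1 - m) = 0`. Distributivity splits every `x` as
`x = (x ⊓ y) + (x ⊓ (1 - y))`, the two parts being orthogonal so that their supremum is their
sum. If `min x y ≤ 1/2` everywhere then `x ⊓ y = 0`, so `x = x ⊓ (1 - y) ≤ 1 - y`. Thus, in any
Boolean algebra containing `p` and `q`, condition (i) forces `p + q ≤ 1`, condition (ii) forces
`p + q ≥ 1`, and condition (iii) forces `q = 1 - p ∈ P`.
-/

namespace IsAlg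

variable {S : Type*} {Q : Set (S → ℝ)}

lemma add_mem_s9 (hQ : IsAlg S Q) {x y : S → ℝ} (hx : x ∈ Q) (hy : y ∈ Q) (hxy : x ≤ 1 - y) :
    x + y ∈ Q := by
  obtain ⟨hprob, h0, -, hsum⟩ := hQ
  have h := hsum x y 0 hx hy h0 hxy
    (fun s => by simpa using (hprob y hy s).2)
    (fun s => by simpa using (hprob x hx s).2)
  simpa using h

lemma isSupIn_add_s9 (hQ : IsAlg S Q) {x y : S → ℝ} (hx : x ∈ Q) (hy : y ∈ Q)
    (hxy : x ≤ 1 - y) : IsSupIn S Q x y (x + y) := by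
  refine ⟨hQ.add_mem_s9 hx hy hxy, fun s => ?_, fun s => ?_, fun u hu hxu hyu s => ?_⟩
  · simp only [Pi.add_apply]; linarith [(hQ.1 y hy s).1]
  · simp only [Pi.add_apply]; linarith [(hQ.1 x hx s).1]
  · -- `x + y + (1 - u)` lies in `Q`, hence is at most `1`.
    have hmem := hQ.2.2.2 x y (1 - u) hx hy (hQ.2.2.1 u hu) hxy
      (fun t => by simp only [Pi.sub_apply, Pi.one_apply]; linarith [hyu t])
      (fun t => by simp only [Pi.sub_apply, Pi.one_apply]; linarith [hxu t])
    have := (hQ.1 _ hmem s).2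
    simp only [Pi.add_apply, Pi.sub_apply, Pi.one_apply] at this ⊢
    linarith

lemma isInfIn_one (hQ : IsAlg S Q) {x : S → ℝ} (hx : x ∈ Q) : IsInfIn S Q x 1 x :=
  ⟨hx, le_rfl, fun s => (hQ.1 x hx s).2, fun _ _ hux _ => hux⟩

end IsAlg

namespace IsBooleanAlg

variable {S : Type*} {Q : Set (S → ℝ)}

lemma one_sub_mem (hQ : IsBooleanAlg S Q) {x : S → ℝ} (hx : x ∈ Q) : 1 - x ∈ Q :=
  hQ.1.2.2.1 x hx

lemma inf_add_inf_one_sub (hQ : IsBooleanAlg S Q) {x y m m' : S → ℝ} (hx : x ∈ Q)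
    (hy : y ∈ Q) (hm : IsInfIn S Q x y m) (hm' : IsInfIn S Q x (1 - y) m') :
    m + m' = x := by
  have horth : m ≤ 1 - m' := fun s => by
    have h1 := hm.2.2.1 s
    have h2 := hm'.2.2.1 s
    simp only [Pi.sub_apply, Pi.one_apply] at *
    linarith
  exact (hQ.2.2.1 x hx y hy (1 - y) (hQ.one_sub_mem hy) 1 x m m' (m + m')
    (hQ.2.2.2 y hy).2 (hQ.1.isInfIn_one hx) hm hm' (hQ.1.isSupIn_add_s9 hm.1 hm'.1 horth)).symm

lemma eq_zero_of_le_half (hQ : IsBooleanAlg S Q) {m : S → ℝ} (hm : m ∈ Q)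
    (h : ∀ s, m s ≤ 1 / 2) : m = 0 := by
  have hle : m ≤ 0 := (hQ.2.2.2 m hm).1.2.2.2 m hm le_rfl fun s => by
    simp only [Pi.sub_apply, Pi.one_apply]; linarith [h s]
  exact le_antisymm hle fun s => (hQ.1.1 m hm s).1

lemma le_one_sub_of_min_le_half (hQ : IsBooleanAlg S Q) {x y : S → ℝ} (hx : x ∈ Q)
    (hy : y ∈ Q) (h : ∀ s, min (x s) (y s) ≤ 1 / 2) : x ≤ 1 - y := by
  obtain ⟨m, hm⟩ := (hQ.2.1 x hx y hy).1
  obtain ⟨m', hm'⟩ := (hQ.2.1 x hx (1 - y) (hQ.one_sub_mem hy)).1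
  have hm0 : m = 0 := hQ.eq_zero_of_le_half hm.1 fun s =>
    (le_min (hm.2.1 s) (hm.2.2.1 s)).trans (h s)
  have hsplit := hQ.inf_add_inf_one_sub hx hy hm hm'
  rw [hm0, zero_add] at hsplit
  exact hsplit ▸ hm'.2.2.1

lemma one_sub_le_of_half_le_max (hQ : IsBooleanAlg S Q) {x y : S → ℝ} (hx : x ∈ Q)
    (hy : y ∈ Q) (h : ∀ s, 1 / 2 ≤ max (x s) (y s)) : 1 - x ≤ y := by
  have := hQ.le_one_sub_of_min_le_half (hQ.one_sub_mem hx) (hQ.one_sub_mem hy) fun s => by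
    simp only [Pi.sub_apply, Pi.one_apply, min_sub_sub_left]
    linarith [h s]
  simpa using this

end IsBooleanAlg

theorem stmt_9_general {S : Type*} {P : Set (S → ℝ)} (hP : IsBooleanAlg S P)
    {q : S → ℝ} (hqn : q ∉ P)
    (hex : ∃ p ∈ P,
      ((∀ s, min (p s) (q s) ≤ 1 / 2) ∧ ∃ s0, 1 < p s0 + q s0) ∨
      ((∀ s, 1 / 2 ≤ max (p s) (q s)) ∧ ∃ s0, p s0 + q s0 < 1) ∨
      ((∀ s, min (p s) (q s) ≤ 1 / 2) ∧ (∀ s, 1 / 2 ≤ max (p s) (q s)))) :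
    ¬∃ Q : Set (S → ℝ), IsBooleanAlg S Q ∧ P ∪ {q} ⊆ Q := by
  rintro ⟨Q, hQ, hPQ⟩
  obtain ⟨p, hpP, hcase⟩ := hex
  have hp : p ∈ Q := hPQ (Or.inl hpP)
  have hq : q ∈ Q := hPQ (Or.inr rfl)
  rcases hcase with ⟨hmin, s0, hs0⟩ | ⟨hmax, s0, hs0⟩ | ⟨hmin, hmax⟩
  · have := hQ.le_one_sub_of_min_le_half hp hq hmin s0
    simp only [Pi.sub_apply, Pi.one_apply] at this
    linarith
  · have := hQ.one_sub_le_of_half_le_max hp hq hmax s0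
    simp only [Pi.sub_apply, Pi.one_apply] at this
    linarith
  · have hq_eq : q = 1 - p := le_antisymm
      (hQ.le_one_sub_of_min_le_half hq hp fun s => min_comm (p s) (q s) ▸ hmin s)
      (hQ.one_sub_le_of_half_le_max hp hq hmax)
    exact hqn (hq_eq ▸ hP.one_sub_mem hpP)

theorem stmt_9 {S : Type*} [Nonempty S] {P : Set (S → ℝ)} (hP : IsBooleanAlg S P)
    {q : S → ℝ} (hq : IsProb S q) (hqv : Varying S q) (hqn : q ∉ P)
    (hex : ∃ p ∈ P,
      ((∀ s, min (p s) (q s) ≤ 1 / 2) ∧ ∃ s0, 1 < p s0 + q s0) ∨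
      ((∀ s, 1 / 2 ≤ max (p s) (q s)) ∧ ∃ s0, p s0 + q s0 < 1) ∨
      ((∀ s, min (p s) (q s) ≤ 1 / 2) ∧ (∀ s, 1 / 2 ≤ max (p s) (q s)))) :
    ¬∃ Q : Set (S → ℝ), IsBooleanAlg S Q ∧ P ∪ {q} ⊆ Q :=
  stmt_9_general hP hqn hex
end

section
/- Let P be an algebra of S-probabilities that is not a Boolean algebra of S-probabilities, and let q be a varying S-probability with q ∉ P. Suppose there exists p ∈ P such that the four functions p, q, 1 − p, 1 − q are pairwise distinct and every pair of distinct functions among them is reciprocal. Then q is not critical: there exists no Boolean algebra Q of S-probabilities with P ∪ {q} ⊆ Q. -/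
/-!
In a Boolean algebra `Q` of `S`-probabilities an element that is everywhere `≤ 1/2` lies below its
own complement, hence is `0`. If `p, q ∈ Q` satisfy `min p q ≤ 1/2` and `min p (1 - q) ≤ 1/2`
pointwise, the infima `p ⊓ q` and `p ⊓ (1 - q)` are everywhere `≤ 1/2`, so both vanish, and distributivity gives
`p = p ⊓ (q ⊔ (1 - q)) = 0`. Reciprocity of `p = 0` and `q` then forces `q ≥ 1/2` everywhere,
so `q` is not varying.
-/

section BooleanAlg

variable {S : Type*} {Q : Set (S → ℝ)} {p q m : S → ℝ}

theorem IsAlg.nonneg_s10 (hQ : IsAlg S Q) (hp : p ∈ Q) : 0 ≤ p := fun s => (hQ.1 p hp s).1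

theorem IsAlg.le_one_s10 (hQ : IsAlg S Q) (hp : p ∈ Q) : p ≤ 1 := fun s => (hQ.1 p hp s).2

theorem IsAlg.isInfIn_one_right (hQ : IsAlg S Q) (hp : p ∈ Q) : IsInfIn S Q p 1 p :=
  ⟨hp, le_rfl, hQ.le_one_s10 hp, fun _ _ hu _ => hu⟩

theorem IsAlg.isSupIn_zero_zero (hQ : IsAlg S Q) : IsSupIn S Q 0 0 0 :=
  ⟨hQ.2.1, le_rfl, le_rfl, fun _ hu _ _ => hQ.nonneg_s10 hu⟩

theorem IsInfIn.le_half (hm : IsInfIn S Q p q m) (hpq : PRBelow S p q) (s : S) : m s ≤ 1 / 2 := by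
  rcases min_le_iff.mp (hpq s) with h | h
  · exact (hm.2.1 s).trans h
  · exact (hm.2.2.1 s).trans h

theorem PRAbove.half_le_of_zero_left (h : PRAbove S 0 q) (s : S) : 1 / 2 ≤ q s := by
  rcases le_max_iff.mp (h s) with h | h
  · norm_num at h
  · exact h

theorem IsBooleanAlg.eq_zero_of_le_half_s10 (hQ : IsBooleanAlg S Q) (hp : p ∈ Q)
    (hhalf : ∀ s, p s ≤ 1 / 2) : p = 0 := by
  refine le_antisymm ((hQ.2.2.2 p hp).1.2.2.2 p hp le_rfl fun s => ?_) (hQ.1.nonneg_s10 hp)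
  have := hhalf s
  simp only [Pi.sub_apply, Pi.one_apply]
  linarith

theorem IsBooleanAlg.isInfIn_zero_of_prBelow (hQ : IsBooleanAlg S Q) (hp : p ∈ Q) (hq : q ∈ Q)
    (hpq : PRBelow S p q) : IsInfIn S Q p q 0 := by
  obtain ⟨⟨m, hm⟩, -⟩ := hQ.2.1 p hp q hq
  exact hQ.eq_zero_of_le_half_s10 hm.1 (hm.le_half hpq) ▸ hm

theorem IsBooleanAlg.eq_zero_of_prBelow (hQ : IsBooleanAlg S Q) (hp : p ∈ Q) (hq : q ∈ Q)
    (hpq : PRBelow S p q) (hpq' : PRBelow S p (1 - q)) : p = 0 :=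
  have hq' : 1 - q ∈ Q := hQ.1.2.2.1 q hq
  hQ.2.2.1 p hp q hq (1 - q) hq' 1 p 0 0 0 (hQ.2.2.2 q hq).2 (hQ.1.isInfIn_one_right hp)
    (hQ.isInfIn_zero_of_prBelow hp hq hpq) (hQ.isInfIn_zero_of_prBelow hp hq' hpq')
    hQ.1.isSupIn_zero_zero

end BooleanAlg

theorem stmt_10_general {S : Type*} {P : Set (S → ℝ)}
    {q : S → ℝ} (hqv : Varying S q)
    (hex : ∃ p ∈ P,
      (p ≠ q ∧ p ≠ 1 - p ∧ p ≠ 1 - q ∧ q ≠ 1 - p ∧ q ≠ 1 - q ∧ (1 - p : S → ℝ) ≠ 1 - q) ∧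
      (Reciprocal S p q ∧ Reciprocal S p (1 - p) ∧ Reciprocal S p (1 - q) ∧
       Reciprocal S q (1 - p) ∧ Reciprocal S q (1 - q) ∧ Reciprocal S (1 - p) (1 - q))) :
    ¬∃ Q : Set (S → ℝ), IsBooleanAlg S Q ∧ P ∪ {q} ⊆ Q := by
  rintro ⟨Q, hQ, hsub⟩
  obtain ⟨p, hpP, -, hpq, -, hpq', -⟩ := hex
  have hp0 : p = 0 := hQ.eq_zero_of_prBelow (hsub (Or.inl hpP)) (hsub (Or.inr rfl)) hpq.1 hpq'.1
  exact hqv.2 (hp0 ▸ hpq.2).half_le_of_zero_left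

theorem stmt_10 {S : Type*} [Nonempty S] {P : Set (S → ℝ)} (hP : IsAlg S P)
    (hnB : ¬IsBooleanAlg S P)
    {q : S → ℝ} (hq : IsProb S q) (hqv : Varying S q) (hqn : q ∉ P)
    (hex : ∃ p ∈ P,
      (p ≠ q ∧ p ≠ 1 - p ∧ p ≠ 1 - q ∧ q ≠ 1 - p ∧ q ≠ 1 - q ∧ (1 - p : S → ℝ) ≠ 1 - q) ∧
      (Reciprocal S p q ∧ Reciprocal S p (1 - p) ∧ Reciprocal S p (1 - q) ∧
       Reciprocal S q (1 - p) ∧ Reciprocal S q (1 - q) ∧ Reciprocal S (1 - p) (1 - q))) :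
    ¬∃ Q : Set (S → ℝ), IsBooleanAlg S Q ∧ P ∪ {q} ⊆ Q :=
  stmt_10_general hqv hex
end

section
/- Let P be an algebra of S-probabilities that is not a Boolean algebra of S-probabilities, and let q be a varying S-probability with q ∉ P. Suppose there exist varying p₁, p₂, p₃, p₄ ∈ P that are pairwise partially reciprocal below 1/2 (i.e., min(pᵢ(s), pⱼ(s)) ≤ 1/2 for all s ∈ S whenever i ≠ j) such that p₁ ≤ 1 − p₂, p₃ ≤ 1 − p₄, and p₁ + p₂ = p₃ + p₄. Then q is not critical: there exists no Boolean algebra Q of S-probabilities with P ∪ {q} ⊆ Q. -/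
/-!
In a Boolean algebra `Q` of `S`-probabilities an element `u ≤ 1/2` lies below its complement,
so `u = u ⊓ (1 - u) = 0`. Hence two elements that are partially reciprocal below `1/2` meet in
`0`, while an orthogonal sum `p₃ + p₄` is the join `p₃ ⊔ p₄`. If `p₁ ≤ p₃ + p₄` and `p₁` is
partially reciprocal below `1/2` to both `p₃` and `p₄`, distributivity gives
`p₁ = p₁ ⊓ (p₃ ⊔ p₄) = (p₁ ⊓ p₃) ⊔ (p₁ ⊓ p₄) = 0`, which is impossible for a varying `p₁`.
-/

namespace IsAlg

variable {S : Type*} {Q : Set (S → ℝ)}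

theorem add_mem_s12 (hQ : IsAlg S Q) {a b : S → ℝ} (ha : a ∈ Q) (hb : b ∈ Q) (hab : a ≤ 1 - b) :
    a + b ∈ Q := by
  have hb1 : b ≤ 1 - 0 := fun s => by simpa using (hQ.1 b hb s).2
  have ha0 : (0 : S → ℝ) ≤ 1 - a := fun s => by simpa using (hQ.1 a ha s).2
  simpa using hQ.2.2.2 a b 0 ha hb hQ.2.1 hab hb1 ha0

theorem isSupIn_add_s12 (hQ : IsAlg S Q) {a b : S → ℝ} (ha : a ∈ Q) (hb : b ∈ Q)
    (hab : a ≤ 1 - b) : IsSupIn S Q a b (a + b) := by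
  refine ⟨hQ.add_mem_s12 ha hb hab, fun s => ?_, fun s => ?_, fun u hu hau hbu => ?_⟩
  · simpa using (hQ.1 b hb s).1
  · simpa using (hQ.1 a ha s).1
  -- `a`, `b`, `1 - u` are pairwise orthogonal, so `a + b + (1 - u) ≤ 1`.
  have hmem := hQ.2.2.2 a b (1 - u) ha hb (hQ.2.2.1 u hu) hab
    (fun s => by have := hbu s; simp only [Pi.sub_apply, Pi.one_apply]; linarith)
    (fun s => by have := hau s; simp only [Pi.sub_apply, Pi.one_apply]; linarith)
  intro s
  have := (hQ.1 _ hmem s).2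
  simp only [Pi.add_apply, Pi.sub_apply, Pi.one_apply] at this ⊢
  linarith

end IsAlg

theorem isInfIn_of_le {S : Type*} {Q : Set (S → ℝ)} {a b : S → ℝ} (ha : a ∈ Q) (hab : a ≤ b) :
    IsInfIn S Q a b a :=
  ⟨ha, le_rfl, hab, fun _ _ hua _ => hua⟩

theorem isSupIn_self {S : Type*} {Q : Set (S → ℝ)} {a : S → ℝ} (ha : a ∈ Q) :
    IsSupIn S Q a a a :=
  ⟨ha, le_rfl, le_rfl, fun _ _ hau _ => hau⟩

namespace IsBooleanAlg

variable {S : Type*} {Q : Set (S → ℝ)}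

theorem le_zero_of_le_half (hQ : IsBooleanAlg S Q) {u : S → ℝ} (hu : u ∈ Q)
    (hhalf : ∀ s, u s ≤ 1 / 2) : u ≤ 0 :=
  (hQ.2.2.2 u hu).1.2.2.2 u hu le_rfl fun s => by
    have := hhalf s
    simp only [Pi.sub_apply, Pi.one_apply]
    linarith

theorem isInfIn_zero_of_prBelow_s12 (hQ : IsBooleanAlg S Q) {a b : S → ℝ} (ha : a ∈ Q)
    (hb : b ∈ Q) (hab : PRBelow S a b) : IsInfIn S Q a b 0 := by
  refine ⟨hQ.1.2.1, fun s => (hQ.1.1 a ha s).1, fun s => (hQ.1.1 b hb s).1,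
    fun u hu hua hub => hQ.le_zero_of_le_half hu fun s => ?_⟩
  rcases min_le_iff.mp (hab s) with h | h
  · exact (hua s).trans h
  · exact (hub s).trans h

theorem eq_zero_of_prBelow_of_le_add (hQ : IsBooleanAlg S Q) {p₁ p₃ p₄ : S → ℝ}
    (hp₁ : p₁ ∈ Q) (hp₃ : p₃ ∈ Q) (hp₄ : p₄ ∈ Q) (h₁₃ : PRBelow S p₁ p₃)
    (h₁₄ : PRBelow S p₁ p₄) (h₃₄ : p₃ ≤ 1 - p₄) (hle : p₁ ≤ p₃ + p₄) : p₁ = 0 :=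
  hQ.2.2.1 p₁ hp₁ p₃ hp₃ p₄ hp₄ (p₃ + p₄) p₁ 0 0 0 (hQ.1.isSupIn_add_s12 hp₃ hp₄ h₃₄)
    (isInfIn_of_le hp₁ hle) (hQ.isInfIn_zero_of_prBelow_s12 hp₁ hp₃ h₁₃)
    (hQ.isInfIn_zero_of_prBelow_s12 hp₁ hp₄ h₁₄) (isSupIn_self hQ.1.2.1)

end IsBooleanAlg

theorem stmt_12_general {S : Type*} {P : Set (S → ℝ)}
    {q : S → ℝ}
    (hex : ∃ p1 ∈ P, ∃ p2 ∈ P, ∃ p3 ∈ P, ∃ p4 ∈ P,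
      Varying S p1 ∧ Varying S p2 ∧ Varying S p3 ∧ Varying S p4 ∧
      PRBelow S p1 p2 ∧ PRBelow S p1 p3 ∧ PRBelow S p1 p4 ∧
      PRBelow S p2 p3 ∧ PRBelow S p2 p4 ∧ PRBelow S p3 p4 ∧
      p1 ≤ 1 - p2 ∧ p3 ≤ 1 - p4 ∧ p1 + p2 = p3 + p4) :
    ¬∃ Q : Set (S → ℝ), IsBooleanAlg S Q ∧ P ∪ {q} ⊆ Q := by
  rintro ⟨Q, hQ, hPQ⟩
  obtain ⟨p1, hp1, p2, hp2, p3, hp3, p4, hp4, hv1, -, -, -, -, h13, h14, -, -, -,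
    -, h34, hsum⟩ := hex
  have hmem {p : S → ℝ} (hp : p ∈ P) : p ∈ Q := hPQ (Or.inl hp)
  have hle : p1 ≤ p3 + p4 := fun s => by
    have hsum_s : p1 s + p2 s = p3 s + p4 s := congrFun hsum s
    have hp2_nonneg := (hQ.1.1 p2 (hmem hp2) s).1
    show p1 s ≤ p3 s + p4 s
    linarith
  have hzero : p1 = 0 :=
    hQ.eq_zero_of_prBelow_of_le_add (hmem hp1) (hmem hp3) (hmem hp4) h13 h14 h34 hle
  exact hv1.1 fun s => by simp [hzero]

theorem stmt_12 {S : Type*} [Nonempty S] {P : Set (S → ℝ)} (hP : IsAlg S P)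
    (hnB : ¬IsBooleanAlg S P)
    {q : S → ℝ} (hq : IsProb S q) (hqv : Varying S q) (hqn : q ∉ P)
    (hex : ∃ p1 ∈ P, ∃ p2 ∈ P, ∃ p3 ∈ P, ∃ p4 ∈ P,
      Varying S p1 ∧ Varying S p2 ∧ Varying S p3 ∧ Varying S p4 ∧
      PRBelow S p1 p2 ∧ PRBelow S p1 p3 ∧ PRBelow S p1 p4 ∧
      PRBelow S p2 p3 ∧ PRBelow S p2 p4 ∧ PRBelow S p3 p4 ∧
      p1 ≤ 1 - p2 ∧ p3 ≤ 1 - p4 ∧ p1 + p2 = p3 + p4) :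
    ¬∃ Q : Set (S → ℝ), IsBooleanAlg S Q ∧ P ∪ {q} ⊆ Q :=
  stmt_12_general hex
end

section
/- Let n ≥ 2, let N := {1, …, n}, and let p₁, …, pₙ be varying S-probabilities with p₁ + ⋯ + pₙ = 1 (the constant function 1). For I ⊆ N set p_I := Σ_{i∈I} pᵢ and let P := {p_I : I ⊆ N}. Then P is an algebra of S-probabilities, and the map I ↦ p_I is an order isomorphism from (2^N, ⊆) onto (P, ≤) (it is bijective, and I ⊆ J if and only if p_I ≤ p_J) satisfying p_{N∖I} = 1 − p_I for all I ⊆ N. Consequently P is a Boolean algebra of S-probabilities with exactly 2^n elements whose atoms are p₁, …, pₙ. -/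
/-!
At a state `s` where `pₖ(s) > 1/2`, the identity `∑ pᵢ(s) = 1` makes `pₖ(s)` larger than the sum
of all the other `pᵢ(s)`; so `p_I ≤ p_J` forces `k ∈ J` for every `k ∈ I`, and `I ↦ p_I` is an
order embedding of the Boolean algebra `2^N` into the `S`-probabilities. This embedding is
additive on disjoint sets and sends `N` to `1`, hence sends complements to `1 - ·` and
disjointness to orthogonality. The image of a Boolean algebra under such an embedding inherits
infima, suprema, complements, atoms and cardinality from it.
-/

open Finset

section

variable {S α : Type*}

theorem IsInfIn.unique {P : Set (S → ℝ)} {f g m m' : S → ℝ}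
    (h : IsInfIn S P f g m) (h' : IsInfIn S P f g m') : m = m' :=
  le_antisymm (h'.2.2.2 m h.1 h.2.1 h.2.2.1) (h.2.2.2 m' h'.1 h'.2.1 h'.2.2.1)

theorem IsSupIn.unique {P : Set (S → ℝ)} {f g j j' : S → ℝ}
    (h : IsSupIn S P f g j) (h' : IsSupIn S P f g j') : j = j' :=
  le_antisymm (h.2.2.2 j' h'.1 h'.2.1 h'.2.2.1) (h'.2.2.2 j h.1 h.2.1 h.2.2.1)

theorem isInfIn_range [SemilatticeInf α] (e : α ↪o (S → ℝ)) (a b : α) :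
    IsInfIn S (Set.range e) (e a) (e b) (e (a ⊓ b)) := by
  refine ⟨⟨_, rfl⟩, e.monotone inf_le_left, e.monotone inf_le_right, ?_⟩
  rintro _ ⟨c, rfl⟩ hca hcb
  exact e.monotone (le_inf (e.le_iff_le.mp hca) (e.le_iff_le.mp hcb))

theorem isSupIn_range [SemilatticeSup α] (e : α ↪o (S → ℝ)) (a b : α) :
    IsSupIn S (Set.range e) (e a) (e b) (e (a ⊔ b)) := by
  refine ⟨⟨_, rfl⟩, e.monotone le_sup_left, e.monotone le_sup_right, ?_⟩
  rintro _ ⟨c, rfl⟩ hac hbc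
  exact e.monotone (sup_le (e.le_iff_le.mp hac) (e.le_iff_le.mp hbc))

theorem isAtomOf_range_iff [PartialOrder α] [OrderBot α] (e : α ↪o (S → ℝ)) (hbot : e ⊥ = 0)
    (f : S → ℝ) : IsAtomOf S (Set.range e) f ↔ ∃ a, IsAtom a ∧ e a = f := by
  have hne : ∀ a, e a ≠ 0 ↔ a ≠ ⊥ := fun a => by rw [← hbot, e.injective.ne_iff]
  constructor
  · rintro ⟨⟨a, rfl⟩, ha, hmin⟩
    refine ⟨a, isAtom_iff_le_of_ge.mpr ⟨(hne a).mp ha, fun b hb hba => ?_⟩, rfl⟩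
    exact (e.le_iff_le.mp (hmin (e b) ⟨b, rfl⟩ ((hne b).mpr hb) (e.monotone hba)).ge)
  · rintro ⟨a, ha, rfl⟩
    refine ⟨⟨a, rfl⟩, (hne a).mpr ha.ne_bot, ?_⟩
    rintro _ ⟨b, rfl⟩ hb hba
    exact congrArg e (ha.le_iff_eq ((hne b).mp hb) |>.mp (e.le_iff_le.mp hba))

structure IsProbValuation [BooleanAlgebra α] (e : α ↪o (S → ℝ)) : Prop where
  map_sup : ∀ a b, Disjoint a b → e (a ⊔ b) = e a + e b
  map_top : e ⊤ = 1

namespace IsProbValuation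

variable [BooleanAlgebra α] {e : α ↪o (S → ℝ)}

theorem map_compl (he : IsProbValuation e) (a : α) : e aᶜ = 1 - e a := by
  rw [← he.map_top, ← sup_compl_eq_top (x := a), he.map_sup a aᶜ disjoint_compl_right]
  abel

theorem map_bot (he : IsProbValuation e) : e ⊥ = 0 := by
  rw [← compl_top, he.map_compl, he.map_top, sub_self]

theorem isProb (he : IsProbValuation e) (a : α) : IsProb S (e a) := fun s =>
  ⟨by simpa [he.map_bot] using e.monotone bot_le s, by simpa [he.map_top] using e.monotone le_top s⟩

theorem le_one_sub_iff (he : IsProbValuation e) (a b : α) : e a ≤ 1 - e b ↔ Disjoint a b := by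
  rw [← he.map_compl, e.le_iff_le, le_compl_iff_disjoint_right]

theorem isAlg_range (he : IsProbValuation e) : IsAlg S (Set.range e) := by
  refine ⟨?_, ⟨⊥, he.map_bot⟩, ?_, ?_⟩
  · rintro _ ⟨a, rfl⟩
    exact he.isProb a
  · rintro _ ⟨a, rfl⟩
    exact ⟨aᶜ, he.map_compl a⟩
  · rintro _ _ _ ⟨a, rfl⟩ ⟨b, rfl⟩ ⟨c, rfl⟩ hab hbc hca
    rw [he.le_one_sub_iff] at hab hbc hca
    refine ⟨a ⊔ b ⊔ c, ?_⟩
    rw [he.map_sup _ _ (disjoint_sup_left.mpr ⟨hca.symm, hbc⟩), he.map_sup _ _ hab]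

theorem isBooleanAlg_range (he : IsProbValuation e) : IsBooleanAlg S (Set.range e) := by
  refine ⟨he.isAlg_range, ?_, ?_, ?_⟩
  · rintro _ ⟨a, rfl⟩ _ ⟨b, rfl⟩
    exact ⟨⟨_, isInfIn_range e a b⟩, ⟨_, isSupIn_range e a b⟩⟩
  · rintro _ ⟨a, rfl⟩ _ ⟨b, rfl⟩ _ ⟨c, rfl⟩ _ _ _ _ _ hbc ha hab hac hb
    obtain rfl := hbc.unique (isSupIn_range e b c)
    obtain rfl := hab.unique (isInfIn_range e a b)
    obtain rfl := hac.unique (isInfIn_range e a c)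
    rw [ha.unique (isInfIn_range e a (b ⊔ c)), hb.unique (isSupIn_range e _ _), inf_sup_left]
  · rintro _ ⟨a, rfl⟩
    rw [← he.map_compl, ← he.map_bot, ← he.map_top, ← inf_compl_eq_bot (a := a),
      ← sup_compl_eq_top (x := a)]
    exact ⟨isInfIn_range e a aᶜ, isSupIn_range e a aᶜ⟩

end IsProbValuation

section FinsetSum

variable {ι : Type*} [Fintype ι] [DecidableEq ι] {p : ι → S → ℝ}

theorem sum_le_sum_iff_subset_of_exists_half_lt (hnonneg : ∀ i, 0 ≤ p i)
    (hhalf : ∀ i, ∃ s, 1 / 2 < p i s) (hsum : ∑ i, p i = 1) (I J : Finset ι) :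
    ∑ i ∈ I, p i ≤ ∑ i ∈ J, p i ↔ I ⊆ J := by
  refine ⟨fun h k hkI => ?_, fun h => sum_le_sum_of_subset_of_nonneg h fun i _ _ => hnonneg i⟩
  by_contra hkJ
  obtain ⟨s, hs⟩ := hhalf k
  have hI : p k s ≤ ∑ i ∈ I, p i s := single_le_sum (fun i _ => hnonneg i s) hkI
  have hJ : ∑ i ∈ J, p i s ≤ ∑ i ∈ univ.erase k, p i s :=
    sum_le_sum_of_subset_of_nonneg (fun j hj => mem_erase.mpr ⟨ne_of_mem_of_not_mem hj hkJ,
      mem_univ j⟩) fun i _ _ => hnonneg i s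
  have htotal : ∑ i ∈ univ.erase k, p i s + p k s = 1 := by
    rw [sum_erase_add _ _ (mem_univ k)]
    simpa using congrFun hsum s
  have hIJ := h s
  simp only [Finset.sum_apply] at hIJ
  linarith

def finsetSumEmbedding (hnonneg : ∀ i, 0 ≤ p i) (hhalf : ∀ i, ∃ s, 1 / 2 < p i s)
    (hsum : ∑ i, p i = 1) : Finset ι ↪o (S → ℝ) :=
  OrderEmbedding.ofMapLEIff (fun I => ∑ i ∈ I, p i)
    (sum_le_sum_iff_subset_of_exists_half_lt hnonneg hhalf hsum)

@[simp]
theorem finsetSumEmbedding_apply (hnonneg : ∀ i, 0 ≤ p i) (hhalf : ∀ i, ∃ s, 1 / 2 < p i s)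
    (hsum : ∑ i, p i = 1) (I : Finset ι) :
    finsetSumEmbedding hnonneg hhalf hsum I = ∑ i ∈ I, p i :=
  rfl

theorem isProbValuation_finsetSumEmbedding (hnonneg : ∀ i, 0 ≤ p i)
    (hhalf : ∀ i, ∃ s, 1 / 2 < p i s) (hsum : ∑ i, p i = 1) :
    IsProbValuation (finsetSumEmbedding hnonneg hhalf hsum) where
  map_sup _ _ h := sum_union h
  map_top := hsum

end FinsetSum

theorem Varying.exists_half_lt {f : S → ℝ} (hf : Varying S f) : ∃ s, 1 / 2 < f s := by
  simpa using hf.1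

end

theorem stmt_14_general {S : Type*} {n : ℕ}
    (p : Fin n → (S → ℝ)) (hprob : ∀ i, IsProb S (p i))
    (hvar : ∀ i, Varying S (p i)) (hsum : ∑ i, p i = 1) :
    IsAlg S {f | ∃ I : Finset (Fin n), f = ∑ i ∈ I, p i} ∧
    (∀ I J : Finset (Fin n), (∑ i ∈ I, p i) ≤ (∑ i ∈ J, p i) ↔ I ⊆ J) ∧
    (∀ I J : Finset (Fin n), (∑ i ∈ I, p i) = (∑ i ∈ J, p i) → I = J) ∧
    (∀ I : Finset (Fin n), (∑ i ∈ Iᶜ, p i) = 1 - ∑ i ∈ I, p i) ∧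
    IsBooleanAlg S {f | ∃ I : Finset (Fin n), f = ∑ i ∈ I, p i} ∧
    Set.ncard {f | ∃ I : Finset (Fin n), f = ∑ i ∈ I, p i} = 2 ^ n ∧
    (∀ f, IsAtomOf S {f | ∃ I : Finset (Fin n), f = ∑ i ∈ I, p i} f ↔ ∃ i, f = p i) := by
  set e := finsetSumEmbedding (fun i s => (hprob i s).1) (fun i => (hvar i).exists_half_lt) hsum
  have he : IsProbValuation e := isProbValuation_finsetSumEmbedding _ _ hsum
  have hrange : {f | ∃ I : Finset (Fin n), f = ∑ i ∈ I, p i} = Set.range e := by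
    ext f
    simp [e, eq_comm]
  rw [hrange]
  refine ⟨he.isAlg_range, fun I J => e.le_iff_le, fun I J h => e.injective h, he.map_compl,
    he.isBooleanAlg_range, ?_, fun f => ?_⟩
  · rw [Set.ncard_range_of_injective e.injective, Nat.card_eq_fintype_card, Fintype.card_finset,
      Fintype.card_fin]
  · rw [isAtomOf_range_iff e he.map_bot]
    simp [Finset.isAtom_iff, e, eq_comm]

theorem stmt_14 {S : Type*} [Nonempty S] {n : ℕ} (hn : 2 ≤ n)
    (p : Fin n → (S → ℝ)) (hprob : ∀ i, IsProb S (p i))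
    (hvar : ∀ i, Varying S (p i)) (hsum : ∑ i, p i = 1) :
    IsAlg S {f | ∃ I : Finset (Fin n), f = ∑ i ∈ I, p i} ∧
    (∀ I J : Finset (Fin n), (∑ i ∈ I, p i) ≤ (∑ i ∈ J, p i) ↔ I ⊆ J) ∧
    (∀ I J : Finset (Fin n), (∑ i ∈ I, p i) = (∑ i ∈ J, p i) → I = J) ∧
    (∀ I : Finset (Fin n), (∑ i ∈ Iᶜ, p i) = 1 - ∑ i ∈ I, p i) ∧
    IsBooleanAlg S {f | ∃ I : Finset (Fin n), f = ∑ i ∈ I, p i} ∧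
    Set.ncard {f | ∃ I : Finset (Fin n), f = ∑ i ∈ I, p i} = 2 ^ n ∧
    (∀ f, IsAtomOf S {f | ∃ I : Finset (Fin n), f = ∑ i ∈ I, p i} f ↔ ∃ i, f = p i) :=
  stmt_14_general p hprob hvar hsum
end
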